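/- For every regular language L over a finite alphabet Σ, the Parikh image p(L) = {p(w) | w ∈ L} is a semi-linear subset of ℕ^|Σ|, where p(w) counts the occurrences of each letter of Σ in w (Parikh's theorem restricted to regular languages). -/

import Mathlib

/-- A linear subset of `ℕ^d`: all vectors `b₀ + z₁•b₁ + ... + z_ℓ•b_ℓ`. -/
def IsLinear {d : ℕ} (S : Set (Fin d → ℕ)) : Prop :=
  ∃ (b₀ : Fin d → ℕ) (ℓ : ℕ) (b : Fin ℓ → Fin d → ℕ),
    S = {v | ∃ z : Fin ℓ → ℕ, v = b₀ + ∑ i, z i • b i}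

/-- A semi-linear subset of `ℕ^d`: a finite union of linear sets. -/
def IsSemilinear {d : ℕ} (S : Set (Fin d → ℕ)) : Prop :=
  ∃ (n : ℕ) (T : Fin n → Set (Fin d → ℕ)), (∀ i, IsLinear (T i)) ∧ S = ⋃ i, T i

/-- The number of input-consuming steps among the first `i` steps. -/
def readCount (reads : ℕ → Bool) (i : ℕ) : ℕ :=
  ((Finset.range i).filter (fun j => reads j = true)).card

/-- A run of an ε-free vector-labeled automaton on the infinite word `α`:
`p` is the state sequence, `v i` the vector of the `i`-th transition. -/
def IsRun {Q Sig : Type} {d : ℕ} (q0 : Q) (Δ : Set (Q × Sig × (Fin d → ℕ) × Q))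
    (α : ℕ → Sig) (p : ℕ → Q) (v : ℕ → Fin d → ℕ) : Prop :=
  p 0 = q0 ∧ ∀ i, (p i, α i, v i, p (i + 1)) ∈ Δ

/-- A run of an automaton with ε-transitions `E` on the infinite word `α`;
`reads i = true` iff the `i`-th transition consumes an input symbol, and
infinitely many transitions must consume a symbol. -/
def IsEpsRun {Q Sig : Type} {d : ℕ} (q0 : Q) (Δ : Set (Q × Sig × (Fin d → ℕ) × Q))
    (E : Set (Q × (Fin d → ℕ) × Q)) (α : ℕ → Sig) (p : ℕ → Q) (v : ℕ → Fin d → ℕ)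
    (reads : ℕ → Bool) : Prop :=
  p 0 = q0 ∧ (∀ N, ∃ i, N ≤ i ∧ reads i = true) ∧
    ∀ i, if reads i then (p i, α (readCount reads i), v i, p (i + 1)) ∈ Δ
      else (p i, v i, p (i + 1)) ∈ E

/-- Prefix-acceptance: infinitely many positions `n ≥ 1` where the current state is
accepting and the accumulated vector sum lies in the (state-dependent) semi-linear set. -/
def PrefixCond {Q : Type} {d : ℕ} (F : Set Q) (C : Q → Set (Fin d → ℕ))
    (p : ℕ → Q) (v : ℕ → Fin d → ℕ) : Prop :=
  ∀ N, ∃ n, N ≤ n ∧ 1 ≤ n ∧ p n ∈ F ∧ (∑ j ∈ Finset.range n, v j) ∈ C (p n)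

/-- Weak reset-acceptance: there are infinitely many reset positions `0 = k 0 < k 1 < ...`
such that each `p (k (i+1))` is accepting and the vector sum between consecutive
reset positions lies in the corresponding semi-linear set. -/
def WeakCond {Q : Type} {d : ℕ} (F : Set Q) (C : Q → Set (Fin d → ℕ))
    (p : ℕ → Q) (v : ℕ → Fin d → ℕ) : Prop :=
  ∃ k : ℕ → ℕ, k 0 = 0 ∧ StrictMono k ∧
    ∀ i, p (k (i + 1)) ∈ F ∧
      (∑ j ∈ Finset.Ico (k i) (k (i + 1)), v j) ∈ C (p (k (i + 1)))

/-- Strong reset-acceptance: `k 1 < k 2 < ...` enumerates *all* positions `n ≥ 1` of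
accepting states (so there are infinitely many), and the vector sum between any two
consecutive such positions (with `k 0 = 0`) lies in the corresponding semi-linear set. -/
def StrongCond {Q : Type} {d : ℕ} (F : Set Q) (C : Q → Set (Fin d → ℕ))
    (p : ℕ → Q) (v : ℕ → Fin d → ℕ) : Prop :=
  ∃ k : ℕ → ℕ, k 0 = 0 ∧ StrictMono k ∧
    (∀ n, 1 ≤ n → (p n ∈ F ↔ ∃ i, 1 ≤ i ∧ k i = n)) ∧
    ∀ i, (∑ j ∈ Finset.Ico (k i) (k (i + 1)), v j) ∈ C (p (k (i + 1)))

/-- A Parikh(-Büchi) automaton of dimension `d` (also used as a Parikh automaton on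
finite words): finitely many states, vector-labeled transitions, a semi-linear set `C`. -/
structure PBA (Sig : Type) (d : ℕ) where
  Q : Type
  fin : Fintype Q
  q0 : Q
  Δ : Set (Q × Sig × (Fin d → ℕ) × Q)
  F : Set Q
  C : Set (Fin d → ℕ)

attribute [instance] PBA.fin

/-- `P_ω(A)`: the ω-language recognized under prefix-acceptance (PPBA). -/
def PBA.PrefixLang {Sig d} (A : PBA Sig d) : Set (ℕ → Sig) :=
  {α | ∃ p v, IsRun A.q0 A.Δ α p v ∧ PrefixCond A.F (fun _ => A.C) p v}

/-- `W_ω(A)`: the ω-language recognized under weak reset-acceptance (WPBA). -/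
def PBA.WeakLang {Sig d} (A : PBA Sig d) : Set (ℕ → Sig) :=
  {α | ∃ p v, IsRun A.q0 A.Δ α p v ∧ WeakCond A.F (fun _ => A.C) p v}

/-- `S_ω(A)`: the ω-language recognized under strong reset-acceptance (SPBA). -/
def PBA.StrongLang {Sig d} (A : PBA Sig d) : Set (ℕ → Sig) :=
  {α | ∃ p v, IsRun A.q0 A.Δ α p v ∧ StrongCond A.F (fun _ => A.C) p v}

/-- Acceptance of a finite word by a Parikh automaton. -/
def PBA.FinAccepts {Sig d} (A : PBA Sig d) (w : List Sig) : Prop :=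
  ∃ (p : ℕ → A.Q) (v : ℕ → Fin d → ℕ),
    p 0 = A.q0 ∧ (∀ i : Fin w.length, (p i, w.get i, v i, p (i + 1)) ∈ A.Δ) ∧
    p w.length ∈ A.F ∧ (∑ j ∈ Finset.range w.length, v j) ∈ A.C

/-- `L(A)`: the language of finite words recognized by a Parikh automaton. -/
def PBA.FinLang {Sig d} (A : PBA Sig d) : Set (List Sig) := {w | A.FinAccepts w}

/-- A Parikh-Büchi automaton with ε-transitions. -/
structure EpsPBA (Sig : Type) (d : ℕ) where
  Q : Type
  fin : Fintype Q
  q0 : Q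
  Δ : Set (Q × Sig × (Fin d → ℕ) × Q)
  E : Set (Q × (Fin d → ℕ) × Q)
  F : Set Q
  C : Set (Fin d → ℕ)

attribute [instance] EpsPBA.fin

def EpsPBA.PrefixLang {Sig d} (A : EpsPBA Sig d) : Set (ℕ → Sig) :=
  {α | ∃ p v reads, IsEpsRun A.q0 A.Δ A.E α p v reads ∧ PrefixCond A.F (fun _ => A.C) p v}

def EpsPBA.WeakLang {Sig d} (A : EpsPBA Sig d) : Set (ℕ → Sig) :=
  {α | ∃ p v reads, IsEpsRun A.q0 A.Δ A.E α p v reads ∧ WeakCond A.F (fun _ => A.C) p v}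

def EpsPBA.StrongLang {Sig d} (A : EpsPBA Sig d) : Set (ℕ → Sig) :=
  {α | ∃ p v reads, IsEpsRun A.q0 A.Δ A.E α p v reads ∧ StrongCond A.F (fun _ => A.C) p v}

/-- A Multi-PBA: every (accepting) state carries its own semi-linear set. -/
structure MPBA (Sig : Type) (d : ℕ) where
  Q : Type
  fin : Fintype Q
  q0 : Q
  Δ : Set (Q × Sig × (Fin d → ℕ) × Q)
  F : Set Q
  C : Q → Set (Fin d → ℕ)

attribute [instance] MPBA.fin

def MPBA.PrefixLang {Sig d} (A : MPBA Sig d) : Set (ℕ → Sig) :=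
  {α | ∃ p v, IsRun A.q0 A.Δ α p v ∧ PrefixCond A.F A.C p v}

/-- A Multi-PBA with ε-transitions. -/
structure EpsMPBA (Sig : Type) (d : ℕ) where
  Q : Type
  fin : Fintype Q
  q0 : Q
  Δ : Set (Q × Sig × (Fin d → ℕ) × Q)
  E : Set (Q × (Fin d → ℕ) × Q)
  F : Set Q
  C : Q → Set (Fin d → ℕ)

attribute [instance] EpsMPBA.fin

def EpsMPBA.StrongLang {Sig d} (A : EpsMPBA Sig d) : Set (ℕ → Sig) :=
  {α | ∃ p v reads, IsEpsRun A.q0 A.Δ A.E α p v reads ∧ StrongCond A.F A.C p v}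

/-- A language of finite words is Parikh-recognizable. -/
def ParikhRec {Sig : Type} (L : Set (List Sig)) : Prop :=
  ∃ d, ∃ A : PBA Sig d, IsSemilinear A.C ∧ A.FinLang = L

/-- An ω-language is PPBA-recognizable. -/
def PPBARec {Sig : Type} (L : Set (ℕ → Sig)) : Prop :=
  ∃ d, ∃ A : PBA Sig d, IsSemilinear A.C ∧ A.PrefixLang = L

/-- An ω-language is SPBA-recognizable. -/
def SPBARec {Sig : Type} (L : Set (ℕ → Sig)) : Prop :=
  ∃ d, ∃ A : PBA Sig d, IsSemilinear A.C ∧ A.StrongLang = L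

/-- Concatenation of a language of finite words with an ω-language. -/
def CatLang {Sig : Type} (L₁ : Set (List Sig)) (L₂ : Set (ℕ → Sig)) : Set (ℕ → Sig) :=
  {α | ∃ u ∈ L₁, ∃ β ∈ L₂,
    (∀ i : Fin u.length, α i = u.get i) ∧ ∀ n, β n = α (u.length + n)}

/-- `α` is the concatenation `w 0 ++ w 1 ++ w 2 ++ ⋯` of the finite words `w i`. -/
def IsOmegaConcat {Sig : Type} (w : ℕ → List Sig) (α : ℕ → Sig) : Prop :=
  ∀ n : ℕ, ∀ i : Fin (((List.range n).map w).flatten.length),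
    ((List.range n).map w).flatten.get i = α i

/-- The ω-power `L^ω = {w₁w₂w₃⋯ ∣ w_i ∈ L ∖ {ε}}`. -/
def OmegaPower {Sig : Type} (L : Set (List Sig)) : Set (ℕ → Sig) :=
  {α | ∃ w : ℕ → List Sig, (∀ i, w i ∈ L) ∧ (∀ i, w i ≠ []) ∧ IsOmegaConcat w α}

/-- Kleene star of a set of finite words. -/
def ListStar {Sig : Type} (L : Set (List Sig)) : Set (List Sig) :=
  {w | ∃ ws : List (List Sig), (∀ u ∈ ws, u ∈ L) ∧ w = ws.flatten}

/-- A (nondeterministic) Büchi automaton. -/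
structure BuchiNFA (Sig : Type) where
  Q : Type
  fin : Fintype Q
  q0 : Q
  Δ : Set (Q × Sig × Q)
  F : Set Q

attribute [instance] BuchiNFA.fin

def BuchiNFA.Lang {Sig} (B : BuchiNFA Sig) : Set (ℕ → Sig) :=
  {α | ∃ p : ℕ → B.Q, p 0 = B.q0 ∧ (∀ i, (p i, α i, p (i + 1)) ∈ B.Δ) ∧
    ∀ N, ∃ n, N ≤ n ∧ p n ∈ B.F}

/-- An ω-language is ω-regular if it is recognized by a Büchi automaton. -/
def OmegaRegular {Sig : Type} (R : Set (ℕ → Sig)) : Prop := ∃ B : BuchiNFA Sig, B.Lang = R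

/-- A blind `k`-counter machine: transitions are labeled by a letter or ε (`Option Sig`)
and an integer vector. -/
structure CM (Sig : Type) (k : ℕ) where
  Q : Type
  fin : Fintype Q
  q0 : Q
  Δ : Set (Q × Option Sig × (Fin k → ℤ) × Q)
  F : Set Q

attribute [instance] CM.fin

/-- The ω-language of a blind counter machine: some run reads every symbol of `α`
and is infinitely often in an accepting state with all counters equal to `0`. -/
def CM.Lang {Sig k} (M : CM Sig k) : Set (ℕ → Sig) :=
  {α | ∃ (p : ℕ → M.Q) (v : ℕ → Fin k → ℤ) (reads : ℕ → Bool),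
    p 0 = M.q0 ∧ (∀ N, ∃ i, N ≤ i ∧ reads i = true) ∧
    (∀ i, if reads i then (p i, some (α (readCount reads i)), v i, p (i + 1)) ∈ M.Δ
      else (p i, (none : Option Sig), v i, p (i + 1)) ∈ M.Δ) ∧
    ∀ N, ∃ n, N ≤ n ∧ p n ∈ M.F ∧ (∑ j ∈ Finset.range n, v j) = 0}

/-! Let `P X q q'` be the set of words leading a DFA from `q` to `q'` through intermediate states
in `X`. Kleene's decomposition `P (insert r X) q q' = P X q q' + P X q r * (P X r r)∗ * P X r q'`
reduces everything to `X = ∅`, where these languages are finite. The Parikh map sends union,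
concatenation and Kleene star to union, Minkowski sum and generated submonoid, and semilinear sets
are closed under all three; for the last, the submonoid generated by a linear set `a + ⟨G⟩` is
`{0} ∪ (a + ⟨insert a G⟩)`. -/

open Pointwise Set Computability

section Closure

variable {M : Type*} [AddCommMonoid M]

lemma AddSubmonoid.coe_closure_singleton_add_closure (a : M) (G : Set M) :
    (AddSubmonoid.closure ({a} + (AddSubmonoid.closure G : Set M)) : Set M) =
      ({0} : Set M) ∪ ({a} + AddSubmonoid.closure (insert a G)) := by
  set K := AddSubmonoid.closure ({a} + (AddSubmonoid.closure G : Set M))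
  have hG : AddSubmonoid.closure G ≤ AddSubmonoid.closure (insert a G) :=
    AddSubmonoid.closure_mono (subset_insert a G)
  have ha : a ∈ AddSubmonoid.closure (insert a G) :=
    AddSubmonoid.subset_closure (mem_insert a G)
  apply Subset.antisymm
  · intro x hx
    induction hx using AddSubmonoid.closure_induction with
    | mem x hx =>
      obtain ⟨g, hg, rfl⟩ := singleton_add.subset hx
      exact Or.inr (singleton_add.superset ⟨g, hG hg, rfl⟩)
    | zero => exact Or.inl rfl
    | add x y _ _ hx hy =>
      rcases hx with rfl | hx
      · rwa [zero_add]
      rcases hy with rfl | hy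
      · rw [add_zero]; exact Or.inr hx
      obtain ⟨g, hg, rfl⟩ := singleton_add.subset hx
      obtain ⟨h, hh, rfl⟩ := singleton_add.subset hy
      refine Or.inr (singleton_add.superset ⟨g + a + h, ?_, by beta_reduce; abel⟩)
      exact add_mem (add_mem hg ha) hh
  · rintro x (rfl | hx)
    · exact K.zero_mem
    obtain ⟨c, hc, rfl⟩ := singleton_add.subset hx
    rw [insert_eq, AddSubmonoid.closure_union, sup_comm] at hc
    obtain ⟨g, hg, y, hy, rfl⟩ := AddSubmonoid.mem_sup.1 hc
    obtain ⟨n, rfl⟩ := AddSubmonoid.mem_closure_singleton.1 hy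
    have hag : a + g ∈ K := AddSubmonoid.subset_closure (singleton_add.superset ⟨g, hg, rfl⟩)
    have haK : a ∈ K := by
      have : a + 0 ∈ K :=
        AddSubmonoid.subset_closure (singleton_add.superset ⟨0, zero_mem _, rfl⟩)
      rwa [add_zero] at this
    show a + (g + n • a) ∈ K
    rw [show a + (g + n • a) = (a + g) + n • a by abel]
    exact add_mem hag (nsmul_mem haK n)

end Closure

section Semilinear

variable {d : ℕ}

lemma isLinear_iff {S : Set (Fin d → ℕ)} :
    IsLinear S ↔ ∃ (b₀ : Fin d → ℕ) (G : Set (Fin d → ℕ)),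
      G.Finite ∧ S = {b₀} + AddSubmonoid.closure G := by
  constructor
  · rintro ⟨b₀, ℓ, b, rfl⟩
    refine ⟨b₀, range b, finite_range b, ?_⟩
    ext v
    simp [singleton_add, AddSubmonoid.mem_closure_range_iff_of_fintype, eq_comm]
  · rintro ⟨b₀, G, hG, rfl⟩
    obtain ⟨ℓ, b, rfl⟩ := hG.fin_embedding
    refine ⟨b₀, ℓ, b, ?_⟩
    ext v
    simp [singleton_add, AddSubmonoid.mem_closure_range_iff_of_fintype, eq_comm]

lemma isLinear_singleton (v : Fin d → ℕ) : IsLinear {v} :=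
  isLinear_iff.2 ⟨v, ∅, finite_empty, by simp⟩

lemma IsLinear.add {S T : Set (Fin d → ℕ)} (hS : IsLinear S) (hT : IsLinear T) :
    IsLinear (S + T) := by
  obtain ⟨a, G, hG, rfl⟩ := isLinear_iff.1 hS
  obtain ⟨b, H, hH, rfl⟩ := isLinear_iff.1 hT
  refine isLinear_iff.2 ⟨a + b, G ∪ H, hG.union hH, ?_⟩
  rw [AddSubmonoid.closure_union, AddSubmonoid.coe_sup, add_add_add_comm, singleton_add_singleton]

lemma IsLinear.isSemilinear {S : Set (Fin d → ℕ)} (hS : IsLinear S) : IsSemilinear S :=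
  ⟨1, fun _ => S, fun _ => hS, (iUnion_const S).symm⟩

lemma isSemilinear_iUnion_of_isLinear {ι : Type*} [Finite ι] {T : ι → Set (Fin d → ℕ)}
    (hT : ∀ i, IsLinear (T i)) : IsSemilinear (⋃ i, T i) := by
  obtain ⟨n, ⟨e⟩⟩ := Finite.exists_equiv_fin ι
  exact ⟨n, T ∘ e.symm, fun i => hT _, (e.symm.surjective.iUnion_comp T).symm⟩

lemma IsSemilinear.iUnion {ι : Type*} [Finite ι] {T : ι → Set (Fin d → ℕ)}
    (hT : ∀ i, IsSemilinear (T i)) : IsSemilinear (⋃ i, T i) := by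
  choose n U hU hTU using hT
  simp_rw [hTU, ← iUnion_sigma (fun p : Σ i, Fin (n i) => U p.1 p.2)]
  exact isSemilinear_iUnion_of_isLinear fun p => hU p.1 p.2

lemma IsSemilinear.union {S T : Set (Fin d → ℕ)} (hS : IsSemilinear S) (hT : IsSemilinear T) :
    IsSemilinear (S ∪ T) := by
  rw [union_eq_iUnion]
  exact IsSemilinear.iUnion (Bool.forall_bool.2 ⟨hT, hS⟩)

lemma isSemilinear_of_finite {S : Set (Fin d → ℕ)} (hS : S.Finite) : IsSemilinear S := by
  have := hS.to_subtype
  rw [← biUnion_of_singleton S, biUnion_eq_iUnion]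
  exact .iUnion fun v => (isLinear_singleton (v : Fin d → ℕ)).isSemilinear

lemma IsSemilinear.add {S T : Set (Fin d → ℕ)} (hS : IsSemilinear S) (hT : IsSemilinear T) :
    IsSemilinear (S + T) := by
  obtain ⟨n, U, hU, rfl⟩ := hS
  obtain ⟨m, W, hW, rfl⟩ := hT
  simp_rw [Set.iUnion_add, Set.add_iUnion]
  exact .iUnion fun i => .iUnion fun j => ((hU i).add (hW j)).isSemilinear

lemma IsLinear.isSemilinear_closure {S : Set (Fin d → ℕ)} (hS : IsLinear S) :
    IsSemilinear (AddSubmonoid.closure S : Set (Fin d → ℕ)) := by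
  obtain ⟨a, G, hG, rfl⟩ := isLinear_iff.1 hS
  rw [AddSubmonoid.coe_closure_singleton_add_closure]
  exact (isSemilinear_of_finite (finite_singleton 0)).union
    (isLinear_iff.2 ⟨a, _, hG.insert a, rfl⟩).isSemilinear

lemma IsSemilinear.closure {S : Set (Fin d → ℕ)} (hS : IsSemilinear S) :
    IsSemilinear (AddSubmonoid.closure S : Set (Fin d → ℕ)) := by
  obtain ⟨n, T, hT, rfl⟩ := hS
  suffices ∀ s : Finset (Fin n),
      IsSemilinear (AddSubmonoid.closure (⋃ i ∈ s, T i) : Set (Fin d → ℕ)) by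
    simpa using this Finset.univ
  intro s
  induction s using Finset.induction_on with
  | empty => simpa using isSemilinear_of_finite (finite_singleton 0)
  | insert i s _ ih =>
    rw [Finset.set_biUnion_insert, AddSubmonoid.closure_union, AddSubmonoid.coe_sup]
    exact (hT i).isSemilinear_closure.add ih

end Semilinear

section Parikh

variable {α : Type*} [BEq α]

def List.parikh (w : List α) (a : α) : ℕ := w.count a

@[simp]
lemma List.parikh_nil : ([] : List α).parikh = 0 := by
  funext a; simp [parikh]

@[simp]
lemma List.parikh_append (u v : List α) : (u ++ v).parikh = u.parikh + v.parikh := by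
  funext a; simp [parikh, count_append]

def Language.parikhImage (l : Language α) : Set (α → ℕ) := {v | ∃ w ∈ l, v = w.parikh}

namespace Language

lemma parikhImage_add (l m : Language α) :
    (l + m).parikhImage = l.parikhImage ∪ m.parikhImage := by
  ext v
  simp only [parikhImage, mem_add, mem_ofPred_eq, mem_union]
  aesop

lemma parikhImage_mul (l m : Language α) :
    (l * m).parikhImage = l.parikhImage + m.parikhImage := by
  ext v
  simp only [parikhImage, mem_mul, mem_ofPred_eq, Set.mem_add]
  aesop

lemma parikhImage_kstar (l : Language α) :
    l∗.parikhImage = AddSubmonoid.closure l.parikhImage := by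
  ext v
  constructor
  · rintro ⟨_, ⟨L, rfl, hL⟩, rfl⟩
    induction L with
    | nil => exact zero_mem _
    | cons u L ih =>
      rw [List.flatten_cons, List.parikh_append]
      exact add_mem (AddSubmonoid.subset_closure ⟨u, hL u (by simp), rfl⟩)
        (ih fun y hy => hL y (by simp [hy]))
  · intro hv
    induction hv using AddSubmonoid.closure_induction with
    | mem v hv =>
      obtain ⟨w, hw, rfl⟩ := hv
      exact ⟨w, ⟨[w], by simp, by simpa using hw⟩, rfl⟩
    | zero => exact ⟨[], nil_mem_kstar l, by simp⟩
    | add _ _ _ _ hu hv =>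
      obtain ⟨u, hu, rfl⟩ := hu
      obtain ⟨v, hv, rfl⟩ := hv
      exact ⟨u ++ v, kstar_mul_kstar l ▸ append_mem_mul hu hv, by simp⟩

lemma parikhImage_iSup {ι : Sort*} (l : ι → Language α) :
    (⨆ i, l i).parikhImage = ⋃ i, (l i).parikhImage := by
  ext v
  simp only [parikhImage, mem_iSup, mem_ofPred_eq, mem_iUnion]
  aesop

end Language

end Parikh

namespace DFA

variable {α σ : Type*} (M : DFA α σ)

/-- `M.IsPathVia X q q' w`: reading `w` from `q` leads to `q'`, and every state visited strictly
in between lies in `X`. -/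
def IsPathVia (X : Set σ) : σ → σ → List α → Prop
  | q, q', [] => q = q'
  | q, q', a :: w =>
    (w = [] ∧ M.step q a = q') ∨ (M.step q a ∈ X ∧ IsPathVia X (M.step q a) q' w)

def pathLang (X : Set σ) (q q' : σ) : Language α := {w | M.IsPathVia X q q' w}

variable {M} {X Y : Set σ} {q q' r : σ}

lemma mem_pathLang {w : List α} : w ∈ M.pathLang X q q' ↔ M.IsPathVia X q q' w := Iff.rfl

lemma isPathVia_univ {w : List α} : M.IsPathVia univ q q' w ↔ M.evalFrom q w = q' := by
  induction w generalizing q with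
  | nil => rfl
  | cons a w ih =>
    rw [evalFrom_cons, ← ih]
    cases w <;> simp [IsPathVia]

lemma pathLang_mono (h : X ⊆ Y) : M.pathLang X q q' ≤ M.pathLang Y q q' := by
  intro w
  induction w generalizing q with
  | nil => exact id
  | cons a w ih => exact Or.imp_right fun hw => ⟨h hw.1, ih hw.2⟩

lemma pathLang_mul_pathLang_le (hr : r ∈ X) :
    M.pathLang X q r * M.pathLang X r q' ≤ M.pathLang X q q' := by
  rintro _ ⟨u, hu, v, hv, rfl⟩
  induction u generalizing q with
  | nil => cases hu; exact hv
  | cons a u ih =>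
    rcases hu with ⟨rfl, rfl⟩ | ⟨ha, hu⟩
    · exact Or.inr ⟨hr, hv⟩
    · exact Or.inr ⟨ha, ih hu⟩

lemma kstar_pathLang_le (hr : r ∈ X) : (M.pathLang X r r)∗ ≤ M.pathLang X r r :=
  kstar_le_of_mul_le_left (by rintro _ rfl; rfl) (pathLang_mul_pathLang_le hr)

/-- A path through `insert r X` either avoids `r` in between, or splits at its first and last
visits to `r`. -/
lemma pathLang_insert :
    M.pathLang (insert r X) q q' =
      M.pathLang X q q' + M.pathLang X q r * (M.pathLang X r r)∗ * M.pathLang X r q' := by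
  apply le_antisymm
  · have hloops :
        M.pathLang X r q' + M.pathLang X r r * (M.pathLang X r r)∗ * M.pathLang X r q' =
          (M.pathLang X r r)∗ * M.pathLang X r q' := by
      conv_rhs => rw [← one_add_mul_kstar]
      rw [add_mul, one_mul]
    intro w
    induction w generalizing q with
    | nil => exact Or.inl
    | cons a w ih =>
      rintro (⟨rfl, h⟩ | ⟨ha | ha, hw⟩)
      · exact Or.inl (Or.inl ⟨rfl, h⟩)
      · rw [ha] at hw
        have hw' := hloops ▸ ih hw
        refine Or.inr ?_
        rw [mul_assoc]
        exact Language.append_mem_mul (a := [a]) (Or.inl ⟨rfl, ha⟩) hw'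
      · rcases ih hw with hw | ⟨_, ⟨u, hu, s, hs, rfl⟩, v, hv, rfl⟩
        · exact Or.inl (Or.inr ⟨ha, hw⟩)
        · exact Or.inr (Language.append_mem_mul
            (Language.append_mem_mul (a := a :: u) (Or.inr ⟨ha, hu⟩) hs) hv)
  · have hXr : X ⊆ insert r X := subset_insert r X
    have hr : r ∈ insert r X := mem_insert r X
    refine add_le_iff.2 ⟨pathLang_mono hXr, ?_⟩
    calc M.pathLang X q r * (M.pathLang X r r)∗ * M.pathLang X r q'
        ≤ M.pathLang (insert r X) q r * M.pathLang (insert r X) r r *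
            M.pathLang (insert r X) r q' := by
          gcongr
          · exact pathLang_mono hXr
          · exact (kstar_mono (pathLang_mono hXr)).trans (kstar_pathLang_le hr)
          · exact pathLang_mono hXr
      _ ≤ M.pathLang (insert r X) q q' := by
          grw [pathLang_mul_pathLang_le hr, pathLang_mul_pathLang_le hr]

lemma accepts_eq_iSup_pathLang : M.accepts = ⨆ q : M.accept, M.pathLang univ M.start q := by
  ext w
  simp [mem_accepts, Language.mem_iSup, mem_pathLang, isPathVia_univ, eval]

end DFA

namespace DFA

variable {k : ℕ} {σ : Type*} (M : DFA (Fin k) σ)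

lemma finite_parikhImage_pathLang_empty (q q' : σ) :
    (M.pathLang ∅ q q').parikhImage.Finite := by
  refine ((finite_range fun a : Fin k => [a].parikh).insert 0).subset ?_
  rintro _ ⟨_ | ⟨a, _ | ⟨b, w⟩⟩, hw, rfl⟩
  · exact Or.inl List.parikh_nil
  · exact Or.inr ⟨a, rfl⟩
  · rcases hw with ⟨⟨⟩, -⟩ | ⟨⟨⟩, -⟩

lemma isSemilinear_parikhImage_pathLang {X : Set σ} (hX : X.Finite) (q q' : σ) :
    IsSemilinear (M.pathLang X q q').parikhImage := by
  induction X, hX using Set.Finite.induction_on generalizing q q' with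
  | empty => exact isSemilinear_of_finite (M.finite_parikhImage_pathLang_empty q q')
  | insert _ _ ih =>
    rw [pathLang_insert, Language.parikhImage_add, Language.parikhImage_mul,
      Language.parikhImage_mul, Language.parikhImage_kstar]
    exact (ih q q').union (((ih _ _).add (ih _ _).closure).add (ih _ _))

end DFA

/-- Parikh's theorem for regular languages: the Parikh image of a regular language
over the alphabet `Fin k` is semi-linear. -/
theorem parikh_image_of_regular_semilinear {k : ℕ} (L : Language (Fin k))
    (hL : L.IsRegular) :
    IsSemilinear {v : Fin k → ℕ | ∃ w ∈ L, v = fun σ => w.count σ} := by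
  obtain ⟨σ, _, M, rfl⟩ := hL
  change IsSemilinear M.accepts.parikhImage
  rw [DFA.accepts_eq_iSup_pathLang, Language.parikhImage_iSup]
  exact .iUnion fun q => M.isSemilinear_parikhImage_pathLang (toFinite univ) _ _
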